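/- arXiv:1801.02999 — 2 statements merged into one kernel-verified Lean document; each statement's English description precedes it below -/
import Mathlib

section
/- Let α, β be smooth convex functions on a neighborhood of 0 with α(0)=β(0)=0, α'(θ)>0, β'(θ)>0, α''>0, β''>0, and let u > α'(0)β'(0). Suppose θ* solves β'(0)α'(θ*) = u. For x ≥ 0 small, the equation β'(α(θ)x)α'(θ) = u has a unique solution θ₊(x), the map x ↦ θ₊(x) is differentiable at 0 with θ₊(0) = θ*, and θ₊'(0) = −(α(θ*)α'(θ*)/α''(θ*))·(β''(0)/β'(0)). -/
open Real

theorem stmt4 (α β : ℝ → ℝ)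
    (hα : ContDiff ℝ (⊤ : ℕ∞) α) (hβ : ContDiff ℝ (⊤ : ℕ∞) β)
    (hα0 : α 0 = 0) (hβ0 : β 0 = 0)
    (hα' : ∀ θ, 0 < deriv α θ) (hβ' : ∀ θ, 0 < deriv β θ)
    (hα'' : ∀ θ, 0 < iteratedDeriv 2 α θ) (hβ'' : ∀ θ, 0 < iteratedDeriv 2 β θ)
    (u : ℝ) (hu : deriv α 0 * deriv β 0 < u)
    (θstar : ℝ) (hθstar : deriv β 0 * deriv α θstar = u) :
    ∃ ε > 0, ∃ θp : ℝ → ℝ,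
      (∀ x, 0 ≤ x → x < ε →
        deriv β (α (θp x) * x) * deriv α (θp x) = u ∧
        ∀ θ' : ℝ, deriv β (α θ' * x) * deriv α θ' = u → θ' = θp x) ∧
      θp 0 = θstar ∧
      HasDerivWithinAt θp
        (-(α θstar * deriv α θstar / iteratedDeriv 2 α θstar)
          * (iteratedDeriv 2 β 0 / deriv β 0))
        (Set.Ici 0) 0 := by
  -- smoothness of derivatives
  have hαi : ContDiff ℝ (⊤ : ℕ∞) α := hα.of_le (by simp)
  have hβi : ContDiff ℝ (⊤ : ℕ∞) β := hβ.of_le (by simp)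
  have hα1 : ContDiff ℝ (⊤ : ℕ∞) (deriv α) := (contDiff_infty_iff_deriv.mp hαi).2
  have hβ1 : ContDiff ℝ (⊤ : ℕ∞) (deriv β) := (contDiff_infty_iff_deriv.mp hβi).2
  have h2α : ∀ t, iteratedDeriv 2 α t = deriv (deriv α) t := by
    intro t; rw [show (2:ℕ) = 1 + 1 from rfl, iteratedDeriv_succ, iteratedDeriv_one]
  have h2β : ∀ t, iteratedDeriv 2 β t = deriv (deriv β) t := by
    intro t; rw [show (2:ℕ) = 1 + 1 from rfl, iteratedDeriv_succ, iteratedDeriv_one]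
  set a : ℝ := deriv (deriv β) 0 * (α θstar * deriv α θstar) with ha_def
  set b : ℝ := deriv β 0 * deriv (deriv α) θstar with hb_def
  have hbpos : 0 < b := mul_pos (hβ' 0) (h2α θstar ▸ hα'' θstar)
  have hb : b ≠ 0 := ne_of_gt hbpos
  set p₀ : ℝ × ℝ := (0, θstar) with hp₀
  -- the map Φ and its strict derivative
  set Φ : ℝ × ℝ → ℝ × ℝ := fun p => (p.1, deriv β (α p.2 * p.1) * deriv α p.2) with hΦdef
  set L1 : ℝ × ℝ →L[ℝ] ℝ × ℝ := (ContinuousLinearMap.fst ℝ ℝ ℝ).prod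
      (a • ContinuousLinearMap.fst ℝ ℝ ℝ + b • ContinuousLinearMap.snd ℝ ℝ ℝ) with hL1
  set L2 : ℝ × ℝ →L[ℝ] ℝ × ℝ := (ContinuousLinearMap.fst ℝ ℝ ℝ).prod
      (b⁻¹ • ContinuousLinearMap.snd ℝ ℝ ℝ - (a / b) • ContinuousLinearMap.fst ℝ ℝ ℝ) with hL2
  have hinv1 : Function.LeftInverse L2 L1 := by
    intro p
    simp only [hL1, hL2, ContinuousLinearMap.prod_apply, ContinuousLinearMap.coe_fst',
      ContinuousLinearMap.add_apply, ContinuousLinearMap.smul_apply,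
      ContinuousLinearMap.coe_snd', ContinuousLinearMap.sub_apply, smul_eq_mul]
    refine Prod.ext rfl ?_
    field_simp
    ring
  have hinv2 : Function.RightInverse L2 L1 := by
    intro p
    simp only [hL1, hL2, ContinuousLinearMap.prod_apply, ContinuousLinearMap.coe_fst',
      ContinuousLinearMap.add_apply, ContinuousLinearMap.smul_apply,
      ContinuousLinearMap.coe_snd', ContinuousLinearMap.sub_apply, smul_eq_mul]
    refine Prod.ext rfl ?_
    field_simp
    ring
  set A : (ℝ × ℝ) ≃L[ℝ] (ℝ × ℝ) := ContinuousLinearEquiv.equivOfInverse L1 L2 hinv1 hinv2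
    with hA
  -- strict derivative of F at p₀
  have hsnd : HasStrictFDerivAt (fun p : ℝ × ℝ => p.2) (ContinuousLinearMap.snd ℝ ℝ ℝ) p₀ :=
    hasStrictFDerivAt_snd
  have hfst : HasStrictFDerivAt (fun p : ℝ × ℝ => p.1) (ContinuousLinearMap.fst ℝ ℝ ℝ) p₀ :=
    hasStrictFDerivAt_fst
  have hαs : HasStrictDerivAt α (deriv α θstar) θstar :=
    hαi.contDiffAt.hasStrictDerivAt (by simp)
  have hA2 : HasStrictFDerivAt (fun p : ℝ × ℝ => α p.2)
      (deriv α θstar • ContinuousLinearMap.snd ℝ ℝ ℝ) p₀ :=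
    hαs.comp_hasStrictFDerivAt_of_eq p₀ hsnd rfl
  have hmul := hA2.mul hfst
  have hg1 : HasStrictDerivAt (deriv β) (deriv (deriv β) 0) 0 :=
    hβ1.contDiffAt.hasStrictDerivAt (by simp)
  have hg2 := hg1.comp_hasStrictFDerivAt_of_eq p₀ hmul (by simp [hp₀])
  have hg3 := (hα1.contDiffAt.hasStrictDerivAt (x := θstar)
    (by simp)).comp_hasStrictFDerivAt_of_eq p₀ hsnd rfl
  have hF0 := hg2.mul hg3
  have hΦs : HasStrictFDerivAt Φ (A : (ℝ × ℝ) →L[ℝ] (ℝ × ℝ)) p₀ := by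
    have h := HasStrictFDerivAt.prodMk hasStrictFDerivAt_fst hF0
    have heq : (ContinuousLinearMap.fst ℝ ℝ ℝ).prod
        ((deriv β ∘ fun y : ℝ × ℝ => α y.2 * y.1) p₀ •
            deriv (deriv α) θstar • ContinuousLinearMap.snd ℝ ℝ ℝ +
          (deriv α ∘ fun p : ℝ × ℝ => p.2) p₀ •
            deriv (deriv β) 0 •
              (α p₀.2 • ContinuousLinearMap.fst ℝ ℝ ℝ +
                p₀.1 • deriv α θstar • ContinuousLinearMap.snd ℝ ℝ ℝ)) =
        (A : (ℝ × ℝ) →L[ℝ] (ℝ × ℝ)) := by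
      refine ContinuousLinearMap.ext fun p => ?_
      refine Prod.ext rfl ?_
      simp [hA, hL1, Function.comp, hp₀, ha_def, hb_def, hθstar]
      ring
    rw [← heq]
    exact h
  have hΦp₀ : Φ p₀ = (0, u) := by
    simp only [hΦdef, hp₀]
    refine Prod.ext rfl ?_
    simp [hθstar]
  -- local inverse
  set ψ : ℝ × ℝ → ℝ × ℝ := hΦs.localInverse Φ A p₀ with hψdef
  have hRight : ∀ᶠ y in nhds (Φ p₀), Φ (ψ y) = y := hΦs.eventually_right_inverse
  rw [hΦp₀] at hRight
  have htend : Filter.Tendsto (fun x : ℝ => (x, u)) (nhds 0) (nhds ((0 : ℝ), u)) :=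
    (continuous_id.prodMk continuous_const).continuousAt
  have hR' : ∀ᶠ x : ℝ in nhds 0, Φ (ψ (x, u)) = (x, u) := htend.eventually hRight
  obtain ⟨ε, hε, hball⟩ := Metric.eventually_nhds_iff.mp hR'
  refine ⟨ε, hε, fun x => (ψ (x, u)).2, ?_, ?_, ?_⟩
  · intro x hx0 hxε
    have hdx : dist x 0 < ε := by
      rw [Real.dist_eq, sub_zero, abs_of_nonneg hx0]; exact hxε
    have h1 := hball hdx
    have h1a : (ψ (x, u)).1 = x := congrArg Prod.fst h1
    have h1b : deriv β (α ((ψ (x, u)).2) * (ψ (x, u)).1) * deriv α ((ψ (x, u)).2) = u :=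
      congrArg Prod.snd h1
    rw [h1a] at h1b
    refine ⟨h1b, ?_⟩
    -- uniqueness via strict monotonicity in θ
    have hmono : StrictMono (fun θ => deriv β (α θ * x) * deriv α θ) := by
      have hder : ∀ θ : ℝ, HasDerivAt (fun θ => deriv β (α θ * x) * deriv α θ)
          (deriv (deriv β) (α θ * x) * (deriv α θ * x) * deriv α θ +
            deriv β (α θ * x) * deriv (deriv α) θ) θ := by
        intro θ
        have h1' : HasDerivAt (fun θ => α θ * x) (deriv α θ * x) θ :=
          ((hαi.differentiable (by simp) θ).hasDerivAt).mul_const x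
        have h2' : HasDerivAt (deriv β) (deriv (deriv β) (α θ * x)) (α θ * x) :=
          (hβ1.differentiable (by simp) _).hasDerivAt
        have h3' := h2'.comp θ h1'
        have h4' : HasDerivAt (deriv α) (deriv (deriv α) θ) θ :=
          (hα1.differentiable (by simp) _).hasDerivAt
        have := h3'.mul h4'
        convert this using 1
        all_goals rfl
      apply strictMono_of_deriv_pos
      intro θ
      rw [(hder θ).deriv]
      have t1 : 0 ≤ deriv (deriv β) (α θ * x) * (deriv α θ * x) * deriv α θ := by
        have hh := (h2β (α θ * x)) ▸ hβ'' (α θ * x)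
        exact mul_nonneg (mul_nonneg hh.le (mul_nonneg (hα' θ).le hx0)) (hα' θ).le
      have t2 : 0 < deriv β (α θ * x) * deriv (deriv α) θ :=
        mul_pos (hβ' _) ((h2α θ) ▸ hα'' θ)
      linarith
    intro θ' hθ'
    exact hmono.injective (hθ'.trans h1b.symm)
  · have h := hΦs.localInverse_apply_image
    rw [hΦp₀] at h
    exact congrArg Prod.snd h
  · -- derivative at 0 from the right
    have hψs : HasStrictFDerivAt ψ (A.symm : (ℝ × ℝ) →L[ℝ] (ℝ × ℝ)) (Φ p₀) :=
      hΦs.to_localInverse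
    rw [hΦp₀] at hψs
    have hj : HasDerivAt (fun x : ℝ => (x, u)) ((1 : ℝ), (0 : ℝ)) 0 :=
      HasDerivAt.prodMk (hasDerivAt_id 0) (hasDerivAt_const 0 u)
    have hcomp : HasDerivAt (fun x : ℝ => ψ (x, u))
        ((A.symm : (ℝ × ℝ) →L[ℝ] (ℝ × ℝ)) (1, 0)) 0 :=
      (hψs.hasFDerivAt.comp_hasDerivAt 0 hj : _)
    have hsnd2 : HasDerivAt (fun x : ℝ => (ψ (x, u)).2)
        (((A.symm : (ℝ × ℝ) →L[ℝ] (ℝ × ℝ)) (1, 0)).2) 0 := by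
      have := ((ContinuousLinearMap.snd ℝ ℝ ℝ).hasFDerivAt).comp_hasDerivAt 0 hcomp
      exact this
    have hval : ((A.symm : (ℝ × ℝ) →L[ℝ] (ℝ × ℝ)) ((1 : ℝ), (0 : ℝ))).2 =
        -(α θstar * deriv α θstar / iteratedDeriv 2 α θstar)
          * (iteratedDeriv 2 β 0 / deriv β 0) := by
      have hsymm : (A.symm : (ℝ × ℝ) →L[ℝ] (ℝ × ℝ)) ((1 : ℝ), (0 : ℝ)) = L2 (1, 0) := by
        rw [hA, ContinuousLinearEquiv.symm_equivOfInverse]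
        rfl
      rw [hsymm]
      simp only [hL2, ContinuousLinearMap.prod_apply, ContinuousLinearMap.sub_apply,
        ContinuousLinearMap.smul_apply, ContinuousLinearMap.coe_snd',
        ContinuousLinearMap.coe_fst', smul_eq_mul]
      rw [h2α, h2β, ha_def, hb_def]
      have hαpos := hα' θstar
      have hβpos := hβ' 0
      have hα2pos := (h2α θstar) ▸ hα'' θstar
      field_simp
      ring
    rw [hval] at hsnd2
    exact hsnd2.hasDerivWithinAt
end

section
/- In the Poisson–Gamma example (A Poisson of rate λ, B Gamma with parameters r, μ), the exponent δ_n = γ_n(θ_n) − θ_n u n satisfies, with ϱ = λr/(μu) and v_k as in the log-expansion of θ_n: δ_n = (1 − ϱ + log ϱ)·u·n + Σ_{k≥2} v̄_k φ_n ψ_n^k, where v̄_k = −(r v_k + u v_{k−1}); in particular the leading coefficient satisfies −r v₁ = (1 − ϱ)u = b α(θ*). -/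
/-! Write `x = (λ/μ)ψ`, `y = (u/r)ψ` and `S = log (1 + x) - log (1 + y)`. The saddle point satisfies
`e^{θ_n} = ϱ⁻¹ (1 + x) / (1 + y)`, and at `θ_n` the argument of the logarithm in `γ_n` collapses to
`(1 + y) / (1 + x)`. Hence `θ_n = θ* + S` and `γ_n(θ_n) = -rφ S`, while the Mercator series gives
`S = ∑_{k ≥ 1} v_k ψ^k`. Splitting off the `k = 1` term of `-rφ S` and using `-r v₁ = (1 - ϱ) u`
leaves `δ_n - (1 - ϱ + log ϱ) u φψ = -rφ (S - v₁ψ) - uφψ S`, which is the stated series. -/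

open Real

theorem hasSum_log_one_add_of_abs_lt_one {x : ℝ} (h : |x| < 1) :
    HasSum (fun n : ℕ => (-1) ^ n * x ^ (n + 1) / (n + 1)) (log (1 + x)) := by
  have h' := (hasSum_pow_div_log_of_abs_lt_one (x := -x) (by rwa [abs_neg])).neg
  rw [neg_neg, sub_neg_eq_add] at h'
  refine h'.congr_fun fun n => ?_
  rw [neg_pow x, pow_succ (-1 : ℝ)]
  ring

theorem hasSum_log_one_add_mul_sub_log_one_add_mul {v : ℕ → ℝ} {a b ψ : ℝ}
    (hv : ∀ k : ℕ, 1 ≤ k → v k = (-1 : ℝ) ^ (k + 1) / k * (a ^ k - b ^ k))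
    (ha : |a * ψ| < 1) (hb : |b * ψ| < 1) :
    HasSum (fun k : ℕ => v (k + 1) * ψ ^ (k + 1)) (log (1 + a * ψ) - log (1 + b * ψ)) := by
  refine ((hasSum_log_one_add_of_abs_lt_one ha).sub
    (hasSum_log_one_add_of_abs_lt_one hb)).congr_fun fun k => ?_
  rw [hv (k + 1) (Nat.le_add_left 1 k)]
  push_cast
  ring

theorem hasSum_shifted_combination {v : ℕ → ℝ} {ψ S : ℝ}
    (hS : HasSum (fun k : ℕ => v (k + 1) * ψ ^ (k + 1)) S) (r u φ : ℝ) :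
    HasSum (fun k : ℕ => -(r * v (k + 2) + u * v (k + 1)) * (φ * ψ ^ (k + 2)))
      (-(r * φ) * (S - v 1 * ψ) - u * φ * ψ * S) := by
  have htail : HasSum (fun k : ℕ => v (k + 2) * ψ ^ (k + 2)) (S - v 1 * ψ) := by
    rw [← hasSum_nat_add_iff' 1] at hS
    simpa using hS
  refine ((htail.mul_left (-(r * φ))).sub (hS.mul_left (u * φ * ψ))).congr_fun fun k => ?_
  ring

theorem saddle_ratio_eq {lam r μ u ψ : ℝ} (hlam : lam ≠ 0) (hr : r ≠ 0) (hμ : μ ≠ 0)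
    (hu : u ≠ 0) :
    (μ * u + lam * ψ * u) / (lam * r + lam * ψ * u)
      = 1 / (lam * r / (μ * u)) * ((1 + lam / μ * ψ) / (1 + u / r * ψ)) := by
  field_simp

theorem cgf_arg_at_saddle {lam r μ u ψ : ℝ} (hlam : lam ≠ 0) (hr : r ≠ 0) (hμ : μ ≠ 0)
    (hx : μ + lam * ψ ≠ 0) (hy : r + u * ψ ≠ 0) :
    μ / (μ - lam * ((μ * u + lam * ψ * u) / (lam * r + lam * ψ * u) - 1) * ψ)
      = (1 + u / r * ψ) / (1 + lam / μ * ψ) := by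
  have hden : μ - lam * ((μ * u + lam * ψ * u) / (lam * r + lam * ψ * u) - 1) * ψ
      = r * (μ + lam * ψ) / (r + u * ψ) := by
    field_simp
    ring
  rw [hden]
  field_simp

theorem stmt16_general (lam r μ u φ ψ ζ1 ζ2 ϱ : ℝ) (v : ℕ → ℝ) (γn : ℝ → ℝ) (θn : ℝ)
    (hlam : 0 < lam) (hr : 0 < r) (hμ : 0 < μ) (hu : 0 < u)
    (hψ : 0 < ψ)
    (hζ1 : ζ1 = lam / μ) (hζ2 : ζ2 = u / r)
    (hϱ : ϱ = lam * r / (μ * u))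
    (hψ1 : ψ < 1 / ζ1) (hψ2 : ψ < 1 / ζ2)
    (hv : ∀ k : ℕ, 1 ≤ k → v k = (-1 : ℝ) ^ (k + 1) / k * (ζ1 ^ k - ζ2 ^ k))
    (hγn : γn = fun θ => r * φ * Real.log (μ / (μ - lam * (Real.exp θ - 1) * ψ)))
    (hθn : θn = Real.log ((μ * u + lam * ψ * u) / (lam * r + lam * ψ * u))) :
    (-(r * v 1) = (1 - ϱ) * u
      ∧ (1 - ϱ) * u = (r / μ) * (lam * (Real.exp (Real.log (1 / ϱ)) - 1)))
    ∧ HasSum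
        (fun k : ℕ => -(r * v (k + 2) + u * v (k + 1)) * (φ * ψ ^ (k + 2)))
        (γn θn - θn * u * (φ * ψ) - (1 - ϱ + Real.log ϱ) * u * (φ * ψ)) := by
  subst hζ1 hζ2 hϱ
  set S := log (1 + lam / μ * ψ) - log (1 + u / r * ψ) with hS
  have hx : |lam / μ * ψ| < 1 := by
    rw [abs_of_pos (by positivity)]
    exact (lt_div_iff₀' (by positivity)).1 hψ1
  have hy : |u / r * ψ| < 1 := by
    rw [abs_of_pos (by positivity)]
    exact (lt_div_iff₀' (by positivity)).1 hψ2
  have hv1 : -(r * v 1) = (1 - lam * r / (μ * u)) * u := by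
    rw [hv 1 le_rfl]
    field_simp
    ring
  have hθ : θn = log (1 / (lam * r / (μ * u))) + S := by
    rw [hθn, saddle_ratio_eq hlam.ne' hr.ne' hμ.ne' hu.ne', log_mul (by positivity) (by positivity),
      hS, ← log_div (by positivity) (by positivity)]
  have hγ : γn θn = -(r * φ) * S := by
    rw [hγn, hθn]
    dsimp only
    rw [exp_log (by positivity),
      cgf_arg_at_saddle hlam.ne' hr.ne' hμ.ne' (by positivity) (by positivity), hS,
      log_div (by positivity) (by positivity)]
    ring
  refine ⟨⟨hv1, ?_⟩, ?_⟩
  · rw [exp_log (by positivity)]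
    field_simp
  · have hseries := hasSum_log_one_add_mul_sub_log_one_add_mul hv hx hy
    convert hasSum_shifted_combination hseries r u φ using 1
    rw [hγ, hθ, one_div, log_inv]
    linear_combination (φ * ψ) * hv1

theorem stmt16 (lam r μ u φ ψ ζ1 ζ2 ϱ : ℝ) (v : ℕ → ℝ) (γn : ℝ → ℝ) (θn : ℝ)
    (hlam : 0 < lam) (hr : 0 < r) (hμ : 0 < μ) (hu : 0 < u)
    (hφ : 0 < φ) (hψ : 0 < ψ)
    (hζ1 : ζ1 = lam / μ) (hζ2 : ζ2 = u / r)
    (hϱ : ϱ = lam * r / (μ * u)) (hϱlt : ϱ < 1)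
    (hψ1 : ψ < 1 / ζ1) (hψ2 : ψ < 1 / ζ2)
    (hv : ∀ k : ℕ, 1 ≤ k → v k = (-1 : ℝ) ^ (k + 1) / k * (ζ1 ^ k - ζ2 ^ k))
    (hγn : γn = fun θ => r * φ * Real.log (μ / (μ - lam * (Real.exp θ - 1) * ψ)))
    (hθn : θn = Real.log ((μ * u + lam * ψ * u) / (lam * r + lam * ψ * u))) :
    (-(r * v 1) = (1 - ϱ) * u
      ∧ (1 - ϱ) * u = (r / μ) * (lam * (Real.exp (Real.log (1 / ϱ)) - 1)))
    ∧ HasSum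
        (fun k : ℕ => -(r * v (k + 2) + u * v (k + 1)) * (φ * ψ ^ (k + 2)))
        (γn θn - θn * u * (φ * ψ) - (1 - ϱ + Real.log ϱ) * u * (φ * ψ)) :=
  stmt16_general lam r μ u φ ψ ζ1 ζ2 ϱ v γn θn hlam hr hμ hu hψ hζ1 hζ2 hϱ hψ1 hψ2 hv hγn hθn
end
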